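/- Let f : [a,b] → ℝ be Lipschitz continuous with constant L ≥ 0. Partition [a,b] into P equal subintervals and let f̂ be the piecewise linear interpolant of f at the partition points. Then ∫_a^b |f(x) − f̂(x)| dx ≤ L(b−a)²/(4P). -/

import Mathlib

/-!
On a piece `[u, v]` of length `h` with chord slope `s`, the error `e = f - f̂` vanishes at both
ends, rises with slope at most `A = L - s` and falls with slope at most `B = L + s`. Hence every
superlevel set `{e > t}`, `t > 0`, is flanked on the left and on the right by stretches of length
at least `t / A` and `t / B` on which `0 < e < t`, so `|{e > t}| ≤ |{e > 0}| - 4t / (A + B)`.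
The layer-cake formula turns this into `∫ e⁺ ≤ (A + B) |{e > 0}|² / 8`, and likewise for `e⁻`.
As `|{e > 0}| + |{e < 0}| ≤ h` and `A + B = 2L`, this gives `∫ |e| ≤ L h² / 4` on each piece.
-/

open MeasureTheory Set
open scoped NNReal

theorem exists_Ioo_add_subset_inter_preimage_Ioo {e : ℝ → ℝ} {p q t A : ℝ} (hpq : p ≤ q)
    (he : ContinuousOn e (Icc p q)) (hp : e p ≤ 0) (ht : 0 < t) (hq : t < e q)
    (hA : ∀ x ∈ Icc p q, ∀ y ∈ Icc p q, x ≤ y → e y - e x ≤ A * (y - x)) :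
    0 < A ∧ ∃ α, Ioo α (α + t / A) ⊆ Ioo p q ∩ e ⁻¹' Ioo 0 t := by
  -- `α` is the last point of `[p, q]` where `e` is nonpositive
  set K := Icc p q ∩ e ⁻¹' Iic 0
  have hK : IsClosed K := he.preimage_isClosed_of_isClosed isClosed_Icc isClosed_Iic
  have hKbdd : BddAbove K := bddAbove_Icc.mono inter_subset_left
  have hαK : sSup K ∈ K := hK.csSup_mem ⟨p, ⟨left_mem_Icc.2 hpq, hp⟩⟩ hKbdd
  set α := sSup K
  obtain ⟨⟨hpα, hαq⟩, hα0 : e α ≤ 0⟩ := hαK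
  have hpos : ∀ x ∈ Ioc α q, 0 < e x := fun x hx => by
    by_contra! h
    exact hx.1.not_ge (le_csSup hKbdd ⟨⟨hpα.trans hx.1.le, hx.2⟩, h⟩)
  have hrise := hA α ⟨hpα, hαq⟩ q ⟨hpq, le_rfl⟩ hαq
  have hApos : 0 < A := by
    by_contra! h
    nlinarith
  have hgap : α + t / A < q := by
    rw [← lt_sub_iff_add_lt', div_lt_iff₀ hApos]
    linarith
  refine ⟨hApos, α, fun x ⟨hαx, hxt⟩ => ⟨⟨hpα.trans_lt hαx, hxt.trans hgap⟩, ?_, ?_⟩⟩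
  · exact hpos x ⟨hαx, (hxt.trans hgap).le⟩
  · have := hA α ⟨hpα, hαq⟩ x ⟨hpα.trans hαx.le, (hxt.trans hgap).le⟩ hαx.le
    rw [← sub_lt_iff_lt_add', lt_div_iff₀ hApos] at hxt
    linarith

theorem exists_Ioo_sub_subset_inter_preimage_Ioo {e : ℝ → ℝ} {p q t B : ℝ} (hpq : p ≤ q)
    (he : ContinuousOn e (Icc p q)) (hq : e q ≤ 0) (ht : 0 < t) (hp : t < e p)
    (hB : ∀ x ∈ Icc p q, ∀ y ∈ Icc p q, x ≤ y → e x - e y ≤ B * (y - x)) :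
    0 < B ∧ ∃ β, Ioo (β - t / B) β ⊆ Ioo p q ∩ e ⁻¹' Ioo 0 t := by
  have hneg : ∀ x ∈ Icc (-q) (-p), -x ∈ Icc p q := fun x hx => by
    constructor <;> linarith [hx.1, hx.2]
  obtain ⟨hBpos, β, hβ⟩ := exists_Ioo_add_subset_inter_preimage_Ioo (e := fun x => e (-x)) (A := B)
    (neg_le_neg hpq) (he.comp continuousOn_neg hneg) (by simpa using hq) ht (by simpa using hp)
    fun x hx y hy hxy => by linarith [hB (-y) (hneg y hy) (-x) (hneg x hx) (neg_le_neg hxy)]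
  refine ⟨hBpos, -β, fun x hx => ?_⟩
  obtain ⟨⟨h₁, h₂⟩, h₃⟩ := hβ (show -x ∈ Ioo β (β + t / B) from
    ⟨by linarith [hx.2], by linarith [hx.1]⟩)
  rw [mem_preimage, neg_neg] at h₃
  exact ⟨⟨by linarith, by linarith⟩, h₃⟩

theorem measureReal_restrict_Icc_Ioo {u v c d : ℝ} (hcd : c ≤ d) (h : Ioo c d ⊆ Icc u v) :
    (volume.restrict (Icc u v)).real (Ioo c d) = d - c := by
  rw [measureReal_restrict_apply measurableSet_Ioo, inter_eq_left.2 h,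
    Real.volume_real_Ioo_of_le hcd]

theorem measureReal_superlevel_add_le {e : ℝ → ℝ} {u v A B t x₀ : ℝ}
    (he : ContinuousOn e (Icc u v)) (hu : e u ≤ 0) (hv : e v ≤ 0)
    (hA : ∀ x ∈ Icc u v, ∀ y ∈ Icc u v, x ≤ y → e y - e x ≤ A * (y - x))
    (hB : ∀ x ∈ Icc u v, ∀ y ∈ Icc u v, x ≤ y → e x - e y ≤ B * (y - x))
    (ht : 0 < t) (hx₀ : x₀ ∈ Icc u v) (htx₀ : t < e x₀) :
    0 < A + B ∧ (volume.restrict (Icc u v)).real {x | t < e x} + 4 * t / (A + B) ≤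
      (volume.restrict (Icc u v)).real {x | 0 < e x} := by
  set μ := volume.restrict (Icc u v)
  have hleft : Icc u x₀ ⊆ Icc u v := Icc_subset_Icc_right hx₀.2
  have hright : Icc x₀ v ⊆ Icc u v := Icc_subset_Icc_left hx₀.1
  obtain ⟨hApos, α, hI⟩ := exists_Ioo_add_subset_inter_preimage_Ioo hx₀.1 (he.mono hleft) hu ht
    htx₀ fun x hx y hy => hA x (hleft hx) y (hleft hy)
  obtain ⟨hBpos, β, hJ⟩ := exists_Ioo_sub_subset_inter_preimage_Ioo hx₀.2 (he.mono hright) hv ht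
    htx₀ fun x hx y hy => hB x (hright hx) y (hright hy)
  set I := Ioo α (α + t / A)
  set J := Ioo (β - t / B) β
  have hIμ : μ.real I = t / A := by
    rw [measureReal_restrict_Icc_Ioo (by linarith [div_pos ht hApos]), add_sub_cancel_left]
    exact fun x hx => Ioo_subset_Icc_self ⟨(hI hx).1.1, (hI hx).1.2.trans_le hx₀.2⟩
  have hJμ : μ.real J = t / B := by
    rw [measureReal_restrict_Icc_Ioo (by linarith [div_pos ht hBpos]), sub_sub_cancel]
    exact fun x hx => Ioo_subset_Icc_self ⟨hx₀.1.trans_lt (hJ hx).1.1, (hJ hx).1.2⟩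
  have hIJ : Disjoint I J := disjoint_left.2 fun x hxI hxJ =>
    (hI hxI).1.2.not_gt (hJ hxJ).1.1
  have hY : Disjoint {x | t < e x} (I ∪ J) := disjoint_left.2 fun x hxY hxIJ => by
    rcases hxIJ with hx | hx
    · exact (hI hx).2.2.not_gt hxY
    · exact (hJ hx).2.2.not_gt hxY
  have hsub : {x | t < e x} ∪ (I ∪ J) ⊆ {x | 0 < e x} := union_subset
    (fun x hx => ht.trans hx) (union_subset (fun x hx => (hI hx).2.1) fun x hx => (hJ hx).2.1)
  have hcount := measureReal_mono (μ := μ) hsub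
  rw [measureReal_union hY (measurableSet_Ioo.union measurableSet_Ioo),
    measureReal_union hIJ measurableSet_Ioo, hIμ, hJμ] at hcount
  have hAM : 4 * t / (A + B) ≤ t / A + t / B := by
    rw [div_add_div _ _ hApos.ne' hBpos.ne', div_le_div_iff₀ (by positivity) (by positivity)]
    nlinarith [sq_nonneg (A - B)]
  exact ⟨by positivity, by linarith⟩

theorem setIntegral_Ioi_le_of_le_sub_mul {m : ℝ → ℝ} {l c : ℝ} (hl : 0 ≤ l) (hc : 0 ≤ c)
    (hm : Antitone m) (hm_zero : ∀ t, l / c < t → m t = 0)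
    (hm_le : ∀ t ∈ Icc 0 (l / c), m t ≤ l - c * t) :
    ∫ t in Ioi 0, m t ≤ l ^ 2 / (2 * c) := by
  have hτ : 0 ≤ l / c := div_nonneg hl hc
  calc ∫ t in Ioi 0, m t = ∫ t in (0)..(l / c), m t := by
        rw [intervalIntegral.integral_of_le hτ]
        exact setIntegral_eq_of_subset_of_forall_sdiff_eq_zero measurableSet_Ioi
          Ioc_subset_Ioi_self fun t ht => hm_zero t (not_le.1 fun h => ht.2 ⟨ht.1, h⟩)
    _ ≤ ∫ t in (0)..(l / c), (l - c * t) :=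
        intervalIntegral.integral_mono_on hτ hm.intervalIntegrable
          ((by fun_prop : Continuous fun t : ℝ => l - c * t).intervalIntegrable _ _) hm_le
    _ = l ^ 2 / (2 * c) := by
        rw [intervalIntegral.integral_sub intervalIntegrable_const
          ((by fun_prop : Continuous fun t : ℝ => c * t).intervalIntegrable _ _),
          intervalIntegral.integral_const_mul, integral_id, intervalIntegral.integral_const,
          smul_eq_mul]
        rcases hc.eq_or_lt with rfl | hc
        · simp
        · field_simp
          ring

theorem setIntegral_posPart_le {e : ℝ → ℝ} {u v A B : ℝ} (hAB : 0 ≤ A + B)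
    (he : ContinuousOn e (Icc u v)) (hu : e u ≤ 0) (hv : e v ≤ 0)
    (hA : ∀ x ∈ Icc u v, ∀ y ∈ Icc u v, x ≤ y → e y - e x ≤ A * (y - x))
    (hB : ∀ x ∈ Icc u v, ∀ y ∈ Icc u v, x ≤ y → e x - e y ≤ B * (y - x)) :
    ∫ x in Icc u v, (e x)⁺ ≤ (A + B) * (volume.restrict (Icc u v)).real {x | 0 < e x} ^ 2 / 8 := by
  set μ := volume.restrict (Icc u v)
  set l := μ.real {x | 0 < e x}
  set m : ℝ → ℝ := fun t => μ.real {x | t < e x}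
  set c := 4 / (A + B)
  have hc : 0 ≤ c := by positivity
  have hm : ∀ t, 0 < t → m t = 0 ∨ (0 < c ∧ m t + c * t ≤ l) := by
    intro t ht
    by_cases h : μ {x | t < e x} = 0
    · exact Or.inl (by simp [m, measureReal_def, h])
    · rw [Measure.restrict_apply' measurableSet_Icc] at h
      obtain ⟨x₀, hx₀, hx₀Icc⟩ := nonempty_of_measure_ne_zero h
      obtain ⟨hpos, hle⟩ := measureReal_superlevel_add_le he hu hv hA hB ht hx₀Icc hx₀
      exact Or.inr ⟨by positivity, by rwa [div_mul_eq_mul_div]⟩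
  have hm_zero : ∀ t, l / c < t → m t = 0 := fun t ht => by
    refine (hm t ((div_nonneg measureReal_nonneg hc).trans_lt ht)).resolve_right
      fun ⟨hcpos, hle⟩ => ht.not_ge ?_
    rw [le_div_iff₀' hcpos]
    linarith [measureReal_nonneg (μ := μ) (s := {x | t < e x})]
  have hm_le : ∀ t ∈ Icc 0 (l / c), m t ≤ l - c * t := by
    rintro t ⟨ht0, htl⟩
    rcases ht0.eq_or_lt with rfl | ht
    · simp [m, l]
    rcases hm t ht with h | ⟨-, h⟩
    · rw [h, sub_nonneg, mul_comm]
      exact mul_le_of_le_div₀ measureReal_nonneg hc htl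
    · linarith
  have hanti : Antitone m := fun s t hst =>
    measureReal_mono fun x (hx : t < e x) => hst.trans_lt hx
  have hlayer : ∫ x in Icc u v, (e x)⁺ = ∫ t in Ioi 0, m t := by
    have hint : IntegrableOn (fun x => (e x)⁺) (Icc u v) :=
      (he.sup continuousOn_const).integrableOn_Icc
    rw [Integrable.integral_eq_integral_meas_lt hint
      (Filter.Eventually.of_forall fun x => posPart_nonneg _)]
    refine setIntegral_congr_fun measurableSet_Ioi fun t (ht : 0 < t) => ?_
    simp only [m, posPart, lt_sup_iff, ht.not_gt, or_false]
    rfl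
  calc ∫ x in Icc u v, (e x)⁺ ≤ l ^ 2 / (2 * c) :=
        hlayer ▸ setIntegral_Ioi_le_of_le_sub_mul measureReal_nonneg hc hanti hm_zero hm_le
    _ = (A + B) * l ^ 2 / 8 := by
        rw [mul_div_assoc', div_div_eq_mul_div]
        ring

theorem integral_abs_le_of_slope_le {e : ℝ → ℝ} {u v A B : ℝ} (huv : u ≤ v) (hAB : 0 ≤ A + B)
    (he : ContinuousOn e (Icc u v)) (hu : e u = 0) (hv : e v = 0)
    (hA : ∀ x ∈ Icc u v, ∀ y ∈ Icc u v, x ≤ y → e y - e x ≤ A * (y - x))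
    (hB : ∀ x ∈ Icc u v, ∀ y ∈ Icc u v, x ≤ y → e x - e y ≤ B * (y - x)) :
    ∫ t in u..v, |e t| ≤ (A + B) * (v - u) ^ 2 / 8 := by
  set μ := volume.restrict (Icc u v)
  set l₁ := μ.real {x | 0 < e x}
  set l₂ := μ.real {x | 0 < -e x}
  have hpos : ∫ t in Icc u v, (e t)⁺ ≤ (A + B) * l₁ ^ 2 / 8 :=
    setIntegral_posPart_le hAB he hu.le hv.le hA hB
  have hneg : ∫ t in Icc u v, (-e t)⁺ ≤ (B + A) * l₂ ^ 2 / 8 :=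
    setIntegral_posPart_le (e := fun t => -e t) (by linarith) he.neg (by simp [hu]) (by simp [hv])
      (fun x hx y hy hxy => by linarith [hB x hx y hy hxy])
      (fun x hx y hy hxy => by linarith [hA x hx y hy hxy])
  have hsupp : l₁ + l₂ ≤ v - u := by
    have hmeas : NullMeasurableSet {x | 0 < -e x} μ :=
      nullMeasurableSet_lt aemeasurable_const (he.neg.aemeasurable measurableSet_Icc)
    have hdisj : Disjoint {x | 0 < e x} {x | 0 < -e x} :=
      disjoint_left.2 fun x (h₁ : 0 < e x) (h₂ : 0 < -e x) => by linarith
    rw [← measureReal_union₀ hmeas hdisj.aedisjoint]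
    calc _ ≤ μ.real univ := measureReal_mono (subset_univ _)
      _ = v - u := by simp [μ, huv]
  have hsplit : ∫ t in u..v, |e t| = (∫ t in Icc u v, (e t)⁺) + ∫ t in Icc u v, (-e t)⁺ := by
    have hint₁ : IntegrableOn (fun t => (e t)⁺) (Icc u v) :=
      (he.sup continuousOn_const).integrableOn_Icc
    have hint₂ : IntegrableOn (fun t => (-e t)⁺) (Icc u v) :=
      (he.neg.sup continuousOn_const).integrableOn_Icc
    rw [intervalIntegral.integral_of_le huv, ← integral_Icc_eq_integral_Ioc,
      ← integral_add hint₁ hint₂]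
    simp only [posPart_neg, posPart_add_negPart]
  have hl₁ : 0 ≤ l₁ := measureReal_nonneg
  have hl₂ : 0 ≤ l₂ := measureReal_nonneg
  have hsq : l₁ ^ 2 + l₂ ^ 2 ≤ (v - u) ^ 2 := by nlinarith
  calc ∫ t in u..v, |e t| ≤ (A + B) * (l₁ ^ 2 + l₂ ^ 2) / 8 := by rw [hsplit]; linarith
    _ ≤ (A + B) * (v - u) ^ 2 / 8 := by gcongr

theorem integral_abs_sub_le_of_eqOn_interp {f g : ℝ → ℝ} {u v : ℝ} {K : ℝ≥0} (huv : u < v)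
    (hf : LipschitzOnWith K f (Icc u v))
    (hg : EqOn g (fun x => f u + (f v - f u) / (v - u) * (x - u)) (Icc u v)) :
    IntervalIntegrable (fun x => |f x - g x|) volume u v ∧
      ∫ x in u..v, |f x - g x| ≤ K * (v - u) ^ 2 / 4 := by
  have hvu : 0 < v - u := sub_pos.2 huv
  set s := (f v - f u) / (v - u)
  set e : ℝ → ℝ := fun x => f x - (f u + s * (x - u))
  have he : ContinuousOn e (Icc u v) := hf.continuousOn.sub (by fun_prop)
  have hfg : EqOn (fun x => |f x - g x|) (fun x => |e x|) (uIcc u v) := by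
    rw [uIcc_of_le huv.le]
    intro x hx
    simp only [e, hg hx]
  have hdist : ∀ x ∈ Icc u v, ∀ y ∈ Icc u v, x ≤ y → |f y - f x| ≤ K * (y - x) := by
    intro x hx y hy hxy
    simpa [Real.dist_eq, abs_of_nonneg (sub_nonneg.2 hxy)] using hf.dist_le_mul y hy x hx
  have hs : |s| ≤ K := by
    have := hdist u (left_mem_Icc.2 huv.le) v (right_mem_Icc.2 huv.le) huv.le
    rwa [← div_le_iff₀ hvu, ← abs_of_pos hvu, ← abs_div] at this
  obtain ⟨hsK, hsK'⟩ := abs_le.1 hs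
  refine ⟨(ContinuousOn.intervalIntegrable (by rw [uIcc_of_le huv.le]; exact he.abs)).congr
    (hfg.symm.mono uIoc_subset_uIcc), ?_⟩
  rw [intervalIntegral.integral_congr hfg]
  calc ∫ x in u..v, |e x| ≤ (K - s + (K + s)) * (v - u) ^ 2 / 8 := by
        refine integral_abs_le_of_slope_le huv.le (by linarith) he (by simp [e])
          (by simp [e, s, div_mul_cancel₀ _ hvu.ne']) (fun x hx y hy hxy => ?_)
          (fun x hx y hy hxy => ?_)
        · linarith [(abs_le.1 (hdist x hx y hy hxy)).2]
        · linarith [(abs_le.1 (hdist x hx y hy hxy)).1]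
    _ = K * (v - u) ^ 2 / 4 := by ring

theorem intervalIntegral_le_of_uniform_partition {g : ℝ → ℝ} {a b C : ℝ} {P : ℕ} (hP : 0 < P)
    (hg : ∀ i < P,
      IntervalIntegrable g volume (a + i * (b - a) / P) (a + (i + 1) * (b - a) / P) ∧
        ∫ x in (a + i * (b - a) / P)..(a + (i + 1) * (b - a) / P), g x ≤ C) :
    ∫ x in a..b, g x ≤ P * C := by
  set X : ℕ → ℝ := fun i => a + i * (b - a) / P
  have hX : ∀ i, X (i + 1) = a + (i + 1) * (b - a) / P := fun i => by simp [X]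
  have hX0 : X 0 = a := by simp [X]
  have hXP : X P = b := by simp [X, hP.ne']
  rw [← hX0, ← hXP,
    ← intervalIntegral.sum_integral_adjacent_intervals fun i hi => hX i ▸ (hg i hi).1]
  calc ∑ i ∈ Finset.range P, ∫ x in X i..X (i + 1), g x ≤ ∑ i ∈ Finset.range P, C :=
        Finset.sum_le_sum fun i hi => hX i ▸ (hg i (Finset.mem_range.1 hi)).2
    _ = P * C := by simp

/-- Piecewise linear interpolation error bound for an `L`-Lipschitz function on `[a,b]`
partitioned into `P` equal subintervals. -/
theorem stmt_1 (a b L : ℝ) (hab : a < b) (hL : 0 ≤ L) (P : ℕ) (hP : 0 < P)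
    (f fhat : ℝ → ℝ)
    (hf : ∀ x ∈ Set.Icc a b, ∀ y ∈ Set.Icc a b, |f x - f y| ≤ L * |x - y|)
    (hfhat : ∀ i : ℕ, i < P →
      ∀ x ∈ Set.Icc (a + i * (b - a) / P) (a + (i + 1) * (b - a) / P),
        fhat x = f (a + i * (b - a) / P) +
          (f (a + (i + 1) * (b - a) / P) - f (a + i * (b - a) / P)) /
            ((b - a) / P) * (x - (a + i * (b - a) / P))) :
    ∫ x in a..b, |f x - fhat x| ≤ L * (b - a) ^ 2 / (4 * P) := by
  have hPpos : (0 : ℝ) < P := Nat.cast_pos.2 hP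
  have hLip : LipschitzOnWith L.toNNReal f (Icc a b) :=
    LipschitzOnWith.of_dist_le' fun x hx y hy => by simpa [Real.dist_eq] using hf x hx y hy
  refine (intervalIntegral_le_of_uniform_partition hP (C := L * ((b - a) / P) ^ 2 / 4)
    fun i hi => ?_).trans_eq (by field_simp)
  have hlen : a + (i + 1) * (b - a) / P - (a + i * (b - a) / P) = (b - a) / P := by ring
  have hi' : (i : ℝ) + 1 ≤ P := by exact_mod_cast hi
  have hsub : Icc (a + i * (b - a) / P) (a + (i + 1) * (b - a) / P) ⊆ Icc a b := by
    refine Icc_subset_Icc ?_ ?_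
    · have : 0 ≤ i * (b - a) / P := by positivity
      linarith
    · have : (i + 1) * (b - a) / P ≤ b - a := by
        rw [div_le_iff₀ hPpos]
        nlinarith
      linarith
  rw [← Real.coe_toNNReal L hL, ← hlen]
  exact integral_abs_sub_le_of_eqOn_interp (by linarith [div_pos (sub_pos.2 hab) hPpos])
    (hLip.mono hsub) fun x hx => by rw [hfhat i hi x hx, hlen]
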